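/- arXiv:2401.16063 — 3 statements merged into one kernel-verified Lean document; each statement's English description precedes it below -/
import Mathlib

section
/- Let u : ℕ → ℝ satisfy u(m+n) ≤ u(m) + u(n) + f(m+n) for all m, n with n ≤ m ≤ 2n, where f : ℕ → ℝ≥0 satisfies f(n) ∈ O(√n). Then the limit lim_{n→∞} u(n)/n exists (possibly equal to −∞). -/
open Filter Asymptotics

namespace QSLaux

/-- Doubling: `w (2^j * n) ≤ 2^j * w n`. -/
lemma double {w : ℕ → ℝ}
    (hw : ∀ m k : ℕ, 1 ≤ k → k ≤ m → m ≤ 2 * k → w (m + k) ≤ w m + w k)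
    {n : ℕ} (hn : 1 ≤ n) : ∀ j : ℕ, w (2 ^ j * n) ≤ 2 ^ j * w n := by
  intro j
  induction j with
  | zero => simp
  | succ j ih =>
    have h1 : 1 ≤ 2 ^ j * n := Nat.one_le_iff_ne_zero.2 (by positivity)
    have h2 := hw (2 ^ j * n) (2 ^ j * n) h1 le_rfl (by omega)
    have heq : 2 ^ (j + 1) * n = 2 ^ j * n + 2 ^ j * n := by ring
    rw [heq]
    calc w (2 ^ j * n + 2 ^ j * n) ≤ w (2 ^ j * n) + w (2 ^ j * n) := h2
      _ ≤ 2 ^ j * w n + 2 ^ j * w n := by linarith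
      _ = 2 ^ (j + 1) * w n := by ring

/-- Dyadic decomposition at level `j`. -/
lemma key {w : ℕ → ℝ}
    (hw : ∀ m k : ℕ, 1 ≤ k → k ≤ m → m ≤ 2 * k → w (m + k) ≤ w m + w k)
    {n : ℕ} (hn : 1 ≤ n) :
    ∀ j N : ℕ, 2 ^ j * n ≤ N → N < 2 ^ (j + 1) * n →
      ∃ r q : ℕ, n ≤ r ∧ r < 2 * n ∧ N = q * n + r ∧ w N ≤ q * w n + w r := by
  intro j
  induction j with
  | zero =>
    intro N h1 h2
    refine ⟨N, 0, by simpa using h1, by simpa using h2, by simp, by simp⟩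
  | succ j ih =>
    intro N h1 h2
    obtain ⟨M, hM⟩ : ∃ M, 2 ^ j * n = M := ⟨_, rfl⟩
    have hM1 : 1 ≤ M := by rw [← hM]; exact Nat.one_le_iff_ne_zero.2 (by positivity)
    have e1 : 2 ^ (j + 1) * n = 2 * M := by rw [← hM]; ring
    have e2 : 2 ^ (j + 2) * n = 4 * M := by rw [← hM]; ring
    rw [e1] at h1
    rw [show j + 1 + 1 = j + 2 from rfl, e2] at h2
    have hdblM : w (2 * M) ≤ 2 ^ (j + 1) * w n := by
      have := double hw hn (j + 1)
      rwa [e1] at this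
    by_cases hc : 3 * (2 * M) ≤ 2 * N
    · -- big case: subtract 2 * M = 2^(j+1) * n
      set b := N - 2 * M with hb
      have hb1 : 2 ^ j * n ≤ b := by omega
      obtain ⟨r, q', hr1, hr2, hb3, hb4⟩ := ih b hb1 (by rw [e1]; omega)
      have hsplit := hw (2 * M) b (by omega) (by omega) (by omega)
      have hNeq : N = 2 * M + b := by omega
      refine ⟨r, 2 ^ (j + 1) + q', hr1, hr2, ?_, ?_⟩
      · have : (2 ^ (j + 1) + q') * n = 2 * M + q' * n := by rw [Nat.add_mul, e1]
        omega
      · rw [hNeq]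
        calc w (2 * M + b) ≤ w (2 * M) + w b := hsplit
          _ ≤ 2 ^ (j + 1) * w n + (q' * w n + w r) := by linarith
          _ = ((2 ^ (j + 1) + q' : ℕ) : ℝ) * w n + w r := by push_cast; ring
    · -- small case: subtract M = 2^j * n
      set a := N - M with ha
      have ha1 : 2 ^ j * n ≤ a := by omega
      obtain ⟨r, q', hr1, hr2, ha3, ha4⟩ := ih a ha1 (by rw [e1]; omega)
      have hsplit := hw a M (by omega) (by omega) (by omega)
      have hNeq : N = a + M := by omega
      have hdbl : w M ≤ 2 ^ j * w n := by
        have := double hw hn j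
        rwa [hM] at this
      refine ⟨r, q' + 2 ^ j, hr1, hr2, ?_, ?_⟩
      · have : (q' + 2 ^ j) * n = q' * n + M := by rw [Nat.add_mul, hM]
        omega
      · rw [hNeq]
        calc w (a + M) ≤ w a + w M := hsplit
          _ ≤ (q' * w n + w r) + 2 ^ j * w n := by linarith
          _ = ((q' + 2 ^ j : ℕ) : ℝ) * w n + w r := by push_cast; ring

/-- Decomposition of any `N ≥ n`. -/
lemma decomp {w : ℕ → ℝ}
    (hw : ∀ m k : ℕ, 1 ≤ k → k ≤ m → m ≤ 2 * k → w (m + k) ≤ w m + w k)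
    {n : ℕ} (hn : 1 ≤ n) {N : ℕ} (hN : n ≤ N) :
    ∃ r q : ℕ, n ≤ r ∧ r < 2 * n ∧ N = q * n + r ∧ w N ≤ q * w n + w r := by
  have hdiv : 1 ≤ N / n := (Nat.one_le_div_iff (by omega)).2 hN
  set j := Nat.log 2 (N / n) with hj
  have h1 : 2 ^ j * n ≤ N := by
    calc 2 ^ j * n ≤ N / n * n := Nat.mul_le_mul_right n (Nat.pow_log_le_self 2 (by omega))
      _ ≤ N := Nat.div_mul_le_self N n
  have h2 : N < 2 ^ (j + 1) * n := by
    have hlt : N / n < 2 ^ (j + 1) := Nat.lt_pow_succ_log_self (by norm_num) _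
    have hdm := Nat.div_add_mod N n
    have hmod : N % n < n := Nat.mod_lt _ (by omega)
    have h3 : (N / n + 1) * n = n * (N / n) + n := by ring
    have h4 : N < (N / n + 1) * n := by omega
    calc N < (N / n + 1) * n := h4
      _ ≤ 2 ^ (j + 1) * n := Nat.mul_le_mul_right n (by omega)
  exact key hw hn j N h1 h2

end QSLaux


/-- De Bruijn's strengthening of Fekete's lemma: if `u(m+n) ≤ u(m) + u(n) + f(m+n)` for all
`n ≤ m ≤ 2n`, where `f ≥ 0` and `f(n) ∈ O(√n)`, then `lim u(n)/n` exists (possibly `−∞`). -/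
theorem quasi_subadditive_limit (u : ℕ → ℝ) (f : ℕ → ℝ)
    (hf0 : ∀ n, 0 ≤ f n)
    (hfO : (fun n => f n) =O[atTop] (fun n => Real.sqrt n))
    (hsub : ∀ m n : ℕ, n ≤ m → m ≤ 2 * n → u (m + n) ≤ u m + u n + f (m + n)) :
    ∃ L : EReal, L ≠ ⊤ ∧
      Tendsto (fun n : ℕ => ((u n / n : ℝ) : EReal)) atTop (nhds L) := by
  -- Step 1: a uniform constant `C` with `f k ≤ C * √k` for all `k ≥ 1`.
  obtain ⟨C, hC0, hC⟩ : ∃ C : ℝ, 0 ≤ C ∧ ∀ k : ℕ, 1 ≤ k → f k ≤ C * Real.sqrt k := by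
    obtain ⟨c, hc0, hc⟩ := hfO.exists_pos
    rw [IsBigOWith, eventually_atTop] at hc
    obtain ⟨n₀, hn₀⟩ := hc
    set S := ∑ i ∈ Finset.range n₀, f i with hS
    have hS0 : 0 ≤ S := Finset.sum_nonneg fun i _ => hf0 i
    refine ⟨c + S, by linarith, fun k hk => ?_⟩
    have hsq : 1 ≤ Real.sqrt k := by
      rw [show (1:ℝ) = Real.sqrt 1 by simp]
      exact Real.sqrt_le_sqrt (by exact_mod_cast hk)
    rcases le_or_gt n₀ k with h | h
    · have h2 := hn₀ k h
      rw [Real.norm_eq_abs, Real.norm_eq_abs, abs_of_nonneg (hf0 k),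
        abs_of_nonneg (Real.sqrt_nonneg _)] at h2
      nlinarith [Real.sqrt_nonneg ((k:ℕ):ℝ)]
    · have hfk : f k ≤ S := Finset.single_le_sum (fun i _ => hf0 i) (Finset.mem_range.2 h)
      nlinarith
  -- Step 2: the geometric inequality
  have key3 : ∀ m k : ℕ, 1 ≤ k → k ≤ m → m ≤ 2 * k →
      11 * Real.sqrt ((m:ℝ) + k) ≤ 10 * (Real.sqrt m + Real.sqrt k) := by
    intro m k hk hkm hm2
    have hmk : Real.sqrt (k:ℝ) ≤ Real.sqrt (m:ℝ) := Real.sqrt_le_sqrt (by exact_mod_cast hkm)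
    have h3 : Real.sqrt ((m:ℝ) + k) ≤ Real.sqrt 3 * Real.sqrt k := by
      rw [← Real.sqrt_mul (by norm_num)]
      refine Real.sqrt_le_sqrt ?_
      have : (m:ℝ) ≤ 2 * k := by exact_mod_cast hm2
      linarith
    have h4 : Real.sqrt 3 ≤ 20/11 := by
      rw [show (20/11:ℝ) = Real.sqrt ((20/11)^2) from (Real.sqrt_sq (by norm_num)).symm]
      exact Real.sqrt_le_sqrt (by norm_num)
    have h5 : 0 ≤ Real.sqrt (k:ℝ) := Real.sqrt_nonneg _
    nlinarith [mul_le_mul_of_nonneg_right h4 h5]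
  -- Step 3: the corrected function `w` is subadditive on the restricted range.
  set D := 10 * C with hDdef
  have hD0 : 0 ≤ D := by positivity
  set w : ℕ → ℝ := fun k => u k + D * Real.sqrt k with hwdef
  have hw : ∀ m k : ℕ, 1 ≤ k → k ≤ m → m ≤ 2 * k → w (m + k) ≤ w m + w k := by
    intro m k hk hkm hm2
    have hu := hsub m k hkm hm2
    have hf := hC (m + k) (by omega)
    have h3 := key3 m k hk hkm hm2
    simp only [hwdef, hDdef]
    push_cast at hf ⊢
    nlinarith [mul_le_mul_of_nonneg_left h3 hC0]
  -- Step 4: limsup bound from any good point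
  have limsup_le : ∀ (n : ℕ) (c : ℝ), 1 ≤ n → w n ≤ c * n →
      limsup (fun N : ℕ => ((w N / N : ℝ) : EReal)) atTop ≤ (c : EReal) := by
    intro n c hn hc
    have hne : (Finset.Ico n (2*n)).Nonempty := ⟨n, Finset.mem_Ico.2 ⟨le_rfl, by omega⟩⟩
    set B := (Finset.Ico n (2*n)).sup' hne (fun r => w r - c * r) with hB
    have hbound : ∀ N : ℕ, n ≤ N → w N ≤ c * N + B := by
      intro N hN
      obtain ⟨r, q, hr1, hr2, hNeq, hle⟩ := QSLaux.decomp hw hn hN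
      have h1 : (q:ℝ) * w n ≤ q * (c * n) :=
        mul_le_mul_of_nonneg_left hc (by positivity)
      have h2 : w r - c * r ≤ B :=
        Finset.le_sup' (fun r => w r - c * (r:ℝ)) (Finset.mem_Ico.2 ⟨hr1, hr2⟩)
      have h3 : (N:ℝ) = q * n + r := by exact_mod_cast congrArg (Nat.cast (R := ℝ)) hNeq
      have h4 : c * (N:ℝ) = q * (c * n) + c * r := by rw [h3]; ring
      linarith
    have hev : ∀ᶠ N : ℕ in atTop, ((w N / N : ℝ) : EReal) ≤ ((c + B / N : ℝ) : EReal) := by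
      filter_upwards [eventually_ge_atTop (max n 1)] with N hN
      have hN1 : (1:ℕ) ≤ N := le_trans (le_max_right _ _) hN
      have hNpos : (0:ℝ) < N := by exact_mod_cast hN1
      rw [EReal.coe_le_coe_iff]
      have hb := hbound N (le_trans (le_max_left _ _) hN)
      rw [div_le_iff₀ hNpos]
      have heq : (c + B / N) * N = c * N + B := by field_simp
      rw [heq]
      exact hb
    have htend : Tendsto (fun N : ℕ => ((c + B / N : ℝ) : EReal)) atTop (nhds (c : EReal)) := by
      rw [EReal.tendsto_coe]
      have := tendsto_const_nhds (x := c) (f := atTop (α := ℕ)) |>.add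
        (tendsto_const_div_atTop_nhds_zero_nat B)
      simpa using this
    calc limsup (fun N : ℕ => ((w N / N : ℝ) : EReal)) atTop
        ≤ limsup (fun N : ℕ => ((c + B / N : ℝ) : EReal)) atTop := limsup_le_limsup hev
      _ = (c : EReal) := htend.limsup_eq
  -- Step 5: limsup ≤ liminf
  set L := liminf (fun N : ℕ => ((w N / N : ℝ) : EReal)) atTop with hLdef
  have hls : limsup (fun N : ℕ => ((w N / N : ℝ) : EReal)) atTop ≤ L := by
    apply EReal.le_of_forall_lt_iff_le.1
    intro z hz
    obtain ⟨N, hNz, hN1⟩ :=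
      ((frequently_lt_of_liminf_lt (by isBoundedDefault) hz).and_eventually
        (eventually_ge_atTop 1)).exists
    have hNpos : (0:ℝ) < N := by exact_mod_cast hN1
    have hlt : w N / N < z := EReal.coe_lt_coe_iff.1 hNz
    have hwN : w N ≤ z * N := by
      rw [div_lt_iff₀ hNpos] at hlt
      linarith
    exact limsup_le N z hN1 hwN
  have hLle : L ≤ limsup (fun N : ℕ => ((w N / N : ℝ) : EReal)) atTop := liminf_le_limsup
  have hLtop : L ≠ ⊤ := by
    have h1 := limsup_le 1 (w 1) le_rfl (by simp)
    exact ne_top_of_le_ne_top (EReal.coe_ne_top _) (le_trans hLle h1)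
  have hT : Tendsto (fun N : ℕ => ((w N / N : ℝ) : EReal)) atTop (nhds L) :=
    tendsto_of_liminf_eq_limsup rfl (le_antisymm hls hLle)
  -- Step 6: convert from `w` back to `u`.
  have hwu : ∀ N : ℕ, u N / N = w N / N - D * Real.sqrt N / N := by
    intro N
    simp only [hwdef]
    ring
  have hsqrt0 : Tendsto (fun N : ℕ => Real.sqrt N / N) atTop (nhds 0) := by
    have hsa : Tendsto (fun N : ℕ => Real.sqrt N) atTop atTop := by
      rw [tendsto_atTop]
      intro b
      filter_upwards [eventually_ge_atTop (⌈b⌉₊ ^ 2)] with N hN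
      have h1 : ((⌈b⌉₊ ^ 2 : ℕ) : ℝ) ≤ (N : ℝ) := by exact_mod_cast hN
      calc b ≤ (⌈b⌉₊ : ℝ) := Nat.le_ceil b
        _ = Real.sqrt ((⌈b⌉₊ : ℝ) ^ 2) := (Real.sqrt_sq (by positivity)).symm
        _ ≤ Real.sqrt N := Real.sqrt_le_sqrt (by push_cast at h1 ⊢; linarith)
    have h1 : Tendsto (fun N : ℕ => (Real.sqrt N)⁻¹) atTop (nhds 0) :=
      hsa.inv_tendsto_atTop
    refine h1.congr' ?_
    filter_upwards [eventually_ge_atTop 1] with N hN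
    have hNpos : (0:ℝ) < N := by exact_mod_cast hN
    rw [eq_comm, div_eq_iff (ne_of_gt hNpos)]
    rw [inv_mul_eq_div, eq_comm, div_eq_iff (by positivity : Real.sqrt (N:ℝ) ≠ 0)]
    exact (Real.mul_self_sqrt hNpos.le).symm
  refine ⟨L, hLtop, ?_⟩
  by_cases hbot : L = ⊥
  · rw [hbot]
    rw [hbot] at hT
    have hreal := EReal.tendsto_nhds_bot_iff_real.1 hT
    refine EReal.tendsto_nhds_bot_iff_real.2 fun x => ?_
    filter_upwards [hreal x] with N hN
    refine lt_of_le_of_lt (EReal.coe_le_coe_iff.2 ?_) hN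
    rw [hwu N]
    have : 0 ≤ D * Real.sqrt N / N := by positivity
    linarith
  · obtain ⟨l, hl⟩ : ∃ l : ℝ, (l : EReal) = L := ⟨L.toReal, EReal.coe_toReal hLtop hbot⟩
    rw [← hl] at hT ⊢
    have hT' : Tendsto (fun N : ℕ => w N / N) atTop (nhds l) := EReal.tendsto_coe.1 hT
    have hDt : Tendsto (fun N : ℕ => D * Real.sqrt N / N) atTop (nhds 0) := by
      have := hsqrt0.const_mul D
      simpa [mul_div_assoc] using this
    have hu : Tendsto (fun N : ℕ => u N / N) atTop (nhds l) := by
      have := hT'.sub hDt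
      simp only [sub_zero] at this
      refine this.congr fun N => (hwu N).symm
    exact EReal.tendsto_coe.2 hu
end

section
/- Let channel sequences U_n : Xⁿ ⇝ Y_n and V_n = f_n(U_n) be given with Φ_n = log₂ max_z |f_n⁻¹(z)| ∈ o(n). If the mutual information capacity I(U) = lim I(U_n)/n exists, then I(V) exists and I(U) = I(V). -/
/-! Grouping the terms of `I(W, p)` along the fibres of `f`, the loss `I(W, p) - I(f(W), p)` is
the conditional mutual information `I(X; Y | f(Y)) = ∑ z, r z * I(X; Y | f(Y) = z)`, where `r` is
the output law of `f(W)`. Each summand is nonnegative by Gibbs' inequality and at most `r z` times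
the entropy of `Y` given `f(Y) = z`, hence at most `r z * log₂ |f⁻¹(z)| ≤ r z * Φ`. So
`0 ≤ I(U_n) - I(V_n) ≤ Φ_n`, and the gap vanishes after dividing by `n` since `Φ_n = o(n)`. -/

open Filter Asymptotics

/-- Output distribution `p•W`. -/
noncomputable def outDist {X Y : Type*} (W : X → Y → ℝ) (p : X → ℝ) (y : Y) : ℝ :=
  ∑' x, p x * W x y

/-- Mutual information density `i(W,p,x,y)`. -/
noncomputable def iDen {X Y : Type*} (W : X → Y → ℝ) (p : X → ℝ) (x : X) (y : Y) : ℝ :=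
  if W x y = 0 ∨ outDist W p y = 0 then 0
  else Real.logb 2 (W x y / outDist W p y)

/-- Mutual information `I(W,p)`. -/
noncomputable def MI {X Y : Type*} (W : X → Y → ℝ) (p : X → ℝ) : ℝ :=
  ∑' xy : X × Y, p xy.1 * W xy.1 xy.2 * iDen W p xy.1 xy.2

/-- The mutual information capacity `I(W) = max_p I(W,p)`. -/
noncomputable def iCap {X Y : Type*} [Fintype X] (W : X → Y → ℝ) : ℝ :=
  ⨆ p : {p : X → ℝ // (∀ x, 0 ≤ p x) ∧ ∑ x, p x = 1}, MI W p.1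

/-- The degraded channel `f(W)`. -/
noncomputable def degrade {X Y Z : Type*} (W : X → Y → ℝ) (f : Y → Z) (x : X) (z : Z) : ℝ :=
  ∑' y : (f ⁻¹' {z}), W x y

open Real Finset

lemma sub_le_mul_log_sub_mul_log {a b : ℝ} (ha : 0 ≤ a) (hb : 0 ≤ b) (hab : b = 0 → a = 0) :
    a - b ≤ a * log a - a * log b := by
  rcases ha.eq_or_lt with rfl | ha
  · simpa using hb
  have hb : 0 < b := hb.lt_of_ne fun h => ha.ne' (hab h.symm)
  have h := mul_le_mul_of_nonneg_left (log_le_sub_one_of_pos (div_pos hb ha)) ha.le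
  rw [log_div hb.ne' ha.ne', mul_sub, mul_sub, mul_one, mul_div_cancel₀ _ ha.ne'] at h
  linarith

lemma mul_log_le_mul_log_of_le {a b : ℝ} (ha : 0 ≤ a) (hab : a ≤ b) :
    a * log a ≤ a * log b := by
  rcases ha.eq_or_lt with rfl | ha
  · simp
  · exact mul_le_mul_of_nonneg_left (log_le_log ha hab) ha.le

lemma sum_mul_log_sub_log_le {Y : Type*} {s : Finset Y} {q : Y → ℝ} {N : ℝ}
    (hq : ∀ y ∈ s, 0 ≤ q y) (hN : 0 < N) (hs : (#s : ℝ) ≤ N) :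
    ∑ y ∈ s, q y * (log (∑ y' ∈ s, q y') - log (q y)) ≤ (∑ y ∈ s, q y) * log N := by
  set r := ∑ y ∈ s, q y
  have hterm : ∀ y ∈ s, q y * (log r - log (q y)) ≤ r / N - q y + q y * log N := by
    intro y hy
    rcases (hq y hy).eq_or_lt with h | h
    · rw [← h]; simp only [zero_mul, sub_zero, add_zero]
      exact div_nonneg (sum_nonneg hq) hN.le
    have hr : 0 < r := h.trans_le (single_le_sum hq hy)
    have := sub_le_mul_log_sub_mul_log (hq y hy) (div_pos hr hN).le fun h' => by
      simp [hr.ne', hN.ne'] at h'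
    rw [log_div hr.ne' hN.ne'] at this
    linarith
  calc ∑ y ∈ s, q y * (log r - log (q y))
      ≤ ∑ y ∈ s, (r / N - q y + q y * log N) := sum_le_sum hterm
    _ = #s * r / N - r + r * log N := by
        rw [sum_add_distrib, sum_sub_distrib, sum_const, nsmul_eq_mul, ← sum_mul]; ring
    _ ≤ r * log N := by
        have : #s * r / N ≤ r := by
          rw [div_le_iff₀ hN, mul_comm r]
          exact mul_le_mul_of_nonneg_right hs (sum_nonneg hq)
        linarith

section JointMI

variable {X Y : Type*} [Fintype X]

/-- `r · I(X;Y)` in nats, for joint weights `a` on `X × s` of total mass `r`. -/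
noncomputable def jointMI (a : X → Y → ℝ) (s : Finset Y) : ℝ :=
  ∑ x, ∑ y ∈ s, a x y * (log (a x y) - log (∑ x', a x' y))
    - ∑ x, (∑ y ∈ s, a x y) * (log (∑ y ∈ s, a x y) - log (∑ x', ∑ y ∈ s, a x' y))

variable {a : X → Y → ℝ} {s : Finset Y}

theorem jointMI_nonneg (ha : ∀ x, ∀ y ∈ s, 0 ≤ a x y) : 0 ≤ jointMI a s := by
  set c : X → ℝ := fun x => ∑ y ∈ s, a x y
  set q : Y → ℝ := fun y => ∑ x, a x y
  set r := ∑ x, c x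
  have hc : ∀ x, 0 ≤ c x := fun x => sum_nonneg (ha x)
  have hq : ∀ y ∈ s, 0 ≤ q y := fun y hy => sum_nonneg fun x _ => ha x y hy
  -- Gibbs' inequality against the product weights `c x * q y / r`.
  have hterm : ∀ x, ∀ y ∈ s, a x y - c x * q y / r ≤
      a x y * (log (a x y) - log (q y)) - a x y * (log (c x) - log r) := by
    intro x y hy
    rcases (ha x y hy).eq_or_lt with h | h
    · rw [← h]
      simpa using div_nonneg (mul_nonneg (hc x) (hq y hy)) (sum_nonneg fun x _ => hc x)
    have hcx : 0 < c x := h.trans_le (single_le_sum (ha x) hy)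
    have hqy : 0 < q y := h.trans_le (single_le_sum (fun x _ => ha x y hy) (mem_univ x))
    have hr : 0 < r := hcx.trans_le (single_le_sum (fun x _ => hc x) (mem_univ x))
    have hb : 0 < c x * q y / r := by positivity
    have := sub_le_mul_log_sub_mul_log (ha x y hy) hb.le fun h' => absurd h' hb.ne'
    rw [log_div (by positivity) hr.ne', log_mul hcx.ne' hqy.ne'] at this
    linarith
  have hqr : ∑ y ∈ s, q y = r := sum_comm
  calc (0 : ℝ) = r - r * r / r := by rw [mul_self_div_self, sub_self]
    _ = ∑ x, ∑ y ∈ s, (a x y - c x * q y / r) := by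
        simp only [sum_sub_distrib, ← sum_div, ← mul_sum, ← sum_mul, hqr]; rfl
    _ ≤ ∑ x, ∑ y ∈ s, (a x y * (log (a x y) - log (q y)) - a x y * (log (c x) - log r)) :=
        sum_le_sum fun x _ => sum_le_sum (hterm x)
    _ = jointMI a s := by simp only [jointMI, sum_sub_distrib, ← sum_mul]; rfl

theorem jointMI_le {N : ℝ} (ha : ∀ x, ∀ y ∈ s, 0 ≤ a x y) (hN : 0 < N)
    (hs : (#s : ℝ) ≤ N) :
    jointMI a s ≤ (∑ x, ∑ y ∈ s, a x y) * log N := by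
  set r := ∑ x, ∑ y ∈ s, a x y
  have hqr : ∑ y ∈ s, ∑ x, a x y = r := sum_comm
  have hmono : ∑ x, ∑ y ∈ s, a x y * log (a x y)
      ≤ ∑ x, (∑ y ∈ s, a x y) * log (∑ y ∈ s, a x y) :=
    sum_le_sum fun x _ => (sum_le_sum fun y hy =>
      mul_log_le_mul_log_of_le (ha x y hy) (single_le_sum (ha x) hy)).trans_eq (sum_mul ..).symm
  have hsplit : jointMI a s = ∑ x, ∑ y ∈ s, a x y * log (a x y)
      - ∑ x, (∑ y ∈ s, a x y) * log (∑ y ∈ s, a x y)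
      + ∑ y ∈ s, (∑ x, a x y) * (log r - log (∑ x, a x y)) := by
    simp only [jointMI, mul_sub, sum_sub_distrib, sum_mul]
    rw [sum_comm (f := fun x y => a x y * log (∑ x', a x' y)),
      sum_comm (f := fun x y => a x y * log r)]
    ring
  have := sum_mul_log_sub_log_le (q := fun y => ∑ x, a x y)
    (fun y hy => sum_nonneg fun x _ => ha x y hy) hN hs
  rw [hqr] at this
  linarith

end JointMI

section Channel

variable {X Y : Type*} [Fintype X] {W : X → Y → ℝ} {p : X → ℝ}

lemma outDist_eq_sum (W : X → Y → ℝ) (p : X → ℝ) (y : Y) :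
    outDist W p y = ∑ x, p x * W x y :=
  tsum_fintype _

lemma hasSum_outDist (hW1 : ∀ x, HasSum (W x) 1) : HasSum (outDist W p) (∑ x, p x) := by
  simpa [funext (outDist_eq_sum W p)] using hasSum_sum fun x _ => (hW1 x).mul_left (p x)

lemma outDist_nonneg (hW0 : ∀ x y, 0 ≤ W x y) (hp0 : ∀ x, 0 ≤ p x) (y : Y) :
    0 ≤ outDist W p y := by
  rw [outDist_eq_sum]
  exact sum_nonneg fun x _ => mul_nonneg (hp0 x) (hW0 x y)

lemma mul_le_outDist (hW0 : ∀ x y, 0 ≤ W x y) (hp0 : ∀ x, 0 ≤ p x) (x : X) (y : Y) :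
    p x * W x y ≤ outDist W p y := by
  rw [outDist_eq_sum]
  exact single_le_sum (fun x _ => mul_nonneg (hp0 x) (hW0 x y)) (mem_univ x)

-- `log 0 = 0` absorbs the case split in `iDen`.
lemma mul_iDen_eq (hW0 : ∀ x y, 0 ≤ W x y) (hp0 : ∀ x, 0 ≤ p x) (x : X) (y : Y) :
    p x * W x y * iDen W p x y =
      p x * W x y * (log (p x * W x y) - log (p x) - log (outDist W p y)) / log 2 := by
  rw [iDen]
  split_ifs with h
  · have : p x * W x y = 0 := by
      rcases h with h | h
      · rw [h, mul_zero]
      · exact le_antisymm (h ▸ mul_le_outDist hW0 hp0 x y) (mul_nonneg (hp0 x) (hW0 x y))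
    simp [this]
  · push Not at h
    rcases (hp0 x).eq_or_lt with hp | hp
    · simp [← hp]
    rw [logb, log_div h.1 h.2, log_mul hp.ne' h.1]
    ring

lemma mul_iDen_le (hW0 : ∀ x y, 0 ≤ W x y) (hp0 : ∀ x, 0 ≤ p x) (x : X) (y : Y) :
    p x * W x y * iDen W p x y ≤ W x y / log 2 := by
  rw [mul_iDen_eq hW0 hp0]
  refine div_le_div_of_nonneg_right ?_ (log_pos one_lt_two).le
  have hmono :=
    mul_log_le_mul_log_of_le (mul_nonneg (hp0 x) (hW0 x y)) (mul_le_outDist hW0 hp0 x y)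
  have hent := negMulLog_le_one_sub_self (hp0 x)
  rw [negMulLog] at hent
  nlinarith [hW0 x y, hp0 x]

lemma le_mul_iDen (hW0 : ∀ x y, 0 ≤ W x y) (hp0 : ∀ x, 0 ≤ p x) (x : X) (y : Y) :
    p x * (W x y - outDist W p y) / log 2 ≤ p x * W x y * iDen W p x y := by
  rw [mul_iDen_eq hW0 hp0]
  refine div_le_div_of_nonneg_right ?_ (log_pos one_lt_two).le
  have ha := mul_nonneg (hp0 x) (hW0 x y)
  have hle := mul_le_outDist hW0 hp0 x y
  rcases ha.eq_or_lt with h0 | h0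
  · rw [← h0]
    nlinarith [mul_nonneg (hp0 x) (ha.trans hle)]
  have hp : 0 < p x := pos_of_mul_pos_left h0 (hW0 x y)
  have hq : 0 < outDist W p y := h0.trans_le hle
  have h := sub_le_mul_log_sub_mul_log ha (mul_pos hp hq).le fun h => absurd h (mul_pos hp hq).ne'
  rw [log_mul hp.ne' hq.ne'] at h
  linarith

lemma summable_mul_iDen (hW0 : ∀ x y, 0 ≤ W x y) (hW1 : ∀ x, HasSum (W x) 1)
    (hp0 : ∀ x, 0 ≤ p x) (x : X) : Summable fun y => p x * W x y * iDen W p x y := by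
  have hq := (hasSum_outDist (p := p) hW1).summable
  refine .of_norm_bounded (((hW1 x).summable.add (hq.mul_left (p x))).div_const (log 2)) fun y => ?_
  have hlog : 0 < log 2 := log_pos one_lt_two
  have hup := mul_iDen_le hW0 hp0 x y
  have hlow := le_mul_iDen hW0 hp0 x y
  have hW := div_nonneg (hW0 x y) hlog.le
  have hpW := div_nonneg (mul_nonneg (hp0 x) (hW0 x y)) hlog.le
  have hpq := div_nonneg (mul_nonneg (hp0 x) (outDist_nonneg hW0 hp0 y)) hlog.le
  rw [mul_sub, sub_div] at hlow
  rw [norm_eq_abs, abs_le, add_div]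
  constructor <;> linarith

lemma summable_prod_of_finite_left {X Y : Type*} [Finite X] {g : X × Y → ℝ}
    (h : ∀ x, Summable fun y => g (x, y)) : Summable g :=
  .of_abs <| (summable_prod_of_nonneg fun _ => abs_nonneg _).2 ⟨fun x => (h x).abs, .of_finite⟩

lemma MI_eq_tsum_sum (hW0 : ∀ x y, 0 ≤ W x y) (hW1 : ∀ x, HasSum (W x) 1)
    (hp0 : ∀ x, 0 ≤ p x) : MI W p = ∑' y, ∑ x, p x * W x y * iDen W p x y := by
  have hs := summable_mul_iDen hW0 hW1 hp0
  have hprod : Summable fun xy : X × Y => p xy.1 * W xy.1 xy.2 * iDen W p xy.1 xy.2 :=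
    summable_prod_of_finite_left hs
  rw [MI, hprod.tsum_prod, tsum_fintype, Summable.tsum_finsetSum fun x _ => hs x]

lemma MI_le_card_div_log_two (hW0 : ∀ x y, 0 ≤ W x y) (hW1 : ∀ x, HasSum (W x) 1)
    (hp0 : ∀ x, 0 ≤ p x) : MI W p ≤ Fintype.card X / log 2 := by
  rw [MI_eq_tsum_sum hW0 hW1 hp0]
  refine (hasSum_le (fun y => sum_le_sum fun x _ => mul_iDen_le hW0 hp0 x y)
    (summable_sum fun x _ => summable_mul_iDen hW0 hW1 hp0 x).hasSum
    (hasSum_sum fun x _ => (hW1 x).div_const (log 2))).trans_eq ?_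
  simp [div_eq_mul_inv]

lemma bddAbove_MI (hW0 : ∀ x y, 0 ≤ W x y) (hW1 : ∀ x, HasSum (W x) 1) :
    BddAbove
      (Set.range fun p : {p : X → ℝ // (∀ x, 0 ≤ p x) ∧ ∑ x, p x = 1} => MI W p.1) :=
  ⟨_, Set.forall_mem_range.2 fun p => MI_le_card_div_log_two hW0 hW1 p.2.1⟩

end Channel

section Degrade

variable {X Y Z : Type*} {W : X → Y → ℝ} {f : Y → Z}

lemma hasSum_degrade (hW1 : ∀ x, HasSum (W x) 1) (x : X) : HasSum (degrade W f x) 1 :=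
  (hW1 x).tsum_fiberwise f

lemma degrade_nonneg (hW0 : ∀ x y, 0 ≤ W x y) (x : X) (z : Z) : 0 ≤ degrade W f x z :=
  tsum_nonneg fun y => hW0 x y

lemma tsum_preimage_eq_sum {g : Y → ℝ} {z : Z} (hz : (f ⁻¹' {z}).Finite) :
    ∑' y : f ⁻¹' {z}, g y = ∑ y ∈ hz.toFinset, g y := by
  rw [← Finset.tsum_subtype', hz.coe_toFinset]

variable [Fintype X] {p : X → ℝ}

lemma outDist_degrade {z : Z} (hz : (f ⁻¹' {z}).Finite) :
    outDist (degrade W f) p z = ∑ x, ∑ y ∈ hz.toFinset, p x * W x y := by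
  simp only [outDist_eq_sum, degrade, tsum_preimage_eq_sum hz, mul_sum]

lemma sum_preimage_sub_eq_jointMI (hW0 : ∀ x y, 0 ≤ W x y) (hp0 : ∀ x, 0 ≤ p x) {z : Z}
    (hz : (f ⁻¹' {z}).Finite) :
    ∑ y ∈ hz.toFinset, ∑ x, p x * W x y * iDen W p x y
      - ∑ x, p x * degrade W f x z * iDen (degrade W f) p x z
      = jointMI (fun x y => p x * W x y) hz.toFinset / log 2 := by
  have hrow : ∀ x, p x * degrade W f x z = ∑ y ∈ hz.toFinset, p x * W x y := fun x => by
    rw [degrade, tsum_preimage_eq_sum hz, mul_sum]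
  rw [sum_comm]
  simp only [mul_iDen_eq hW0 hp0, mul_iDen_eq (W := degrade W f) (degrade_nonneg hW0) hp0]
  simp only [hrow, outDist_degrade hz, outDist_eq_sum W p, jointMI, ← sum_div, ← sub_div]
  congr 1
  simp only [mul_sub, sum_sub_distrib, sum_mul]
  ring

lemma jointMI_preimage_div_log_two_le {Φ : ℝ} (hW0 : ∀ x y, 0 ≤ W x y)
    (hp0 : ∀ x, 0 ≤ p x) {z : Z} (hz : (f ⁻¹' {z}).Finite)
    (hcard : ((f ⁻¹' {z}).ncard : ℝ) ≤ 2 ^ Φ) :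
    jointMI (fun x y => p x * W x y) hz.toFinset / log 2 ≤ outDist (degrade W f) p z * Φ := by
  rw [Set.ncard_eq_toFinset_card _ hz] at hcard
  have := jointMI_le (fun x y _ => mul_nonneg (hp0 x) (hW0 x y)) (rpow_pos_of_pos two_pos Φ) hcard
  rw [log_rpow two_pos, ← outDist_degrade hz] at this
  rw [div_le_iff₀ (log_pos one_lt_two)]
  linarith

theorem MI_sub_MI_degrade_mem_Icc {Φ : ℝ} (hW0 : ∀ x y, 0 ≤ W x y)
    (hW1 : ∀ x, HasSum (W x) 1)
    (hfib : ∀ z, (f ⁻¹' {z}).Finite ∧ ((f ⁻¹' {z}).ncard : ℝ) ≤ 2 ^ Φ)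
    (hp0 : ∀ x, 0 ≤ p x) (hp1 : ∑ x, p x = 1) :
    MI W p - MI (degrade W f) p ∈ Set.Icc 0 Φ := by
  set V := degrade W f
  have hV0 : ∀ x z, 0 ≤ V x z := degrade_nonneg hW0
  have hV1 : ∀ x, HasSum (V x) 1 := hasSum_degrade hW1
  have hM : Summable fun y => ∑ x, p x * W x y * iDen W p x y :=
    summable_sum fun x _ => summable_mul_iDen hW0 hW1 hp0 x
  have hM' : Summable fun z => ∑ x, p x * V x z * iDen V p x z :=
    summable_sum fun x _ => summable_mul_iDen hV0 hV1 hp0 x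
  have hfw := hM.hasSum.tsum_fiberwise f
  have hgap : ∀ z, ∑' y : f ⁻¹' {z}, ∑ x, p x * W x y * iDen W p x y
      - ∑ x, p x * V x z * iDen V p x z
      = jointMI (fun x y => p x * W x y) (hfib z).1.toFinset / log 2 := fun z => by
    rw [tsum_preimage_eq_sum (g := fun y => ∑ x, p x * W x y * iDen W p x y) (hfib z).1,
      sum_preimage_sub_eq_jointMI hW0 hp0]
  have hsplit : MI W p - MI V p
      = ∑' z, jointMI (fun x y => p x * W x y) (hfib z).1.toFinset / log 2 := by
    rw [MI_eq_tsum_sum hW0 hW1 hp0, MI_eq_tsum_sum hV0 hV1 hp0, ← hfw.tsum_eq,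
      ← hfw.summable.tsum_sub hM']
    exact tsum_congr hgap
  refine ⟨hsplit ▸ tsum_nonneg fun z => div_nonneg
    (jointMI_nonneg fun x y _ => mul_nonneg (hp0 x) (hW0 x y)) (log_pos one_lt_two).le, ?_⟩
  calc MI W p - MI V p
      = ∑' z, jointMI (fun x y => p x * W x y) (hfib z).1.toFinset / log 2 := hsplit
    _ ≤ ∑' z, outDist V p z * Φ :=
        Summable.tsum_le_tsum
          (fun z => jointMI_preimage_div_log_two_le hW0 hp0 (hfib z).1 (hfib z).2)
          ((hfw.summable.sub hM').congr hgap) ((hasSum_outDist hV1).summable.mul_right Φ)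
    _ = Φ := by rw [tsum_mul_right, (hasSum_outDist hV1).tsum_eq, hp1, one_mul]

end Degrade

theorem abs_iCap_sub_iCap_degrade_le {X Y Z : Type*} [Fintype X] {W : X → Y → ℝ} {f : Y → Z}
    {Φ : ℝ} (hW0 : ∀ x y, 0 ≤ W x y) (hW1 : ∀ x, HasSum (W x) 1)
    (hfib : ∀ z, (f ⁻¹' {z}).Finite ∧ ((f ⁻¹' {z}).ncard : ℝ) ≤ 2 ^ Φ) :
    |iCap W - iCap (degrade W f)| ≤ |Φ| := by
  rcases isEmpty_or_nonempty {p : X → ℝ // (∀ x, 0 ≤ p x) ∧ ∑ x, p x = 1} with h | h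
  · simp [iCap]
  have hgap := fun p : {p : X → ℝ // (∀ x, 0 ≤ p x) ∧ ∑ x, p x = 1} =>
    MI_sub_MI_degrade_mem_Icc hW0 hW1 hfib p.2.1 p.2.2
  have hle : iCap (degrade W f) ≤ iCap W :=
    ciSup_mono (bddAbove_MI hW0 hW1) fun p => sub_nonneg.1 (hgap p).1
  have hle' : iCap W ≤ iCap (degrade W f) + Φ := ciSup_le fun p =>
    (sub_le_iff_le_add'.1 (hgap p).2).trans <| add_le_add_left
      (le_ciSup (bddAbove_MI (degrade_nonneg hW0) (hasSum_degrade hW1)) p) Φ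
  rw [abs_le]
  constructor <;> linarith [le_abs_self Φ]

theorem iCap_degrade_small_preimage_general
    {X : Type*} [Fintype X] {Y Z : ℕ → Type*}
    (U : ∀ n, (Fin n → X) → Y n → ℝ) (f : ∀ n, Y n → Z n) (Φ : ℕ → ℝ)
    (hU0 : ∀ n x y, 0 ≤ U n x y) (hU1 : ∀ n x, HasSum (U n x) 1)
    (hfib : ∀ n (z : Z n), (f n ⁻¹' {z}).Finite ∧ (((f n ⁻¹' {z}).ncard : ℝ)) ≤ 2 ^ Φ n)
    (hΦ : Φ =o[atTop] (fun n => (n : ℝ)))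
    (IU : ℝ)
    (hlim : Tendsto (fun n => iCap (U n) / n) atTop (nhds IU)) :
    Tendsto (fun n => iCap (degrade (U n) (f n)) / n) atTop (nhds IU) := by
  have hbound : ∀ n : ℕ, ‖iCap (U n) / n - iCap (degrade (U n) (f n)) / n‖ ≤ |Φ n / n| :=
    fun n => by
      rw [norm_eq_abs, ← sub_div, abs_div, abs_div]
      exact div_le_div_of_nonneg_right
        (abs_iCap_sub_iCap_degrade_le (hU0 n) (hU1 n) (hfib n)) (abs_nonneg _)
  have hgap := squeeze_zero_norm hbound (by simpa using hΦ.tendsto_div_nhds_zero.abs)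
  simpa using hlim.sub hgap

/-- Degrading a channel sequence by functions whose preimage log-sizes are `o(n)` does not
change the mutual information capacity: if `I(U) = lim I(U_n)/n` exists, then `I(V)` exists
for `V_n = f_n(U_n)` and `I(V) = I(U)`. -/
theorem iCap_degrade_small_preimage
    {X : Type*} [Fintype X] {Y Z : ℕ → Type*} [∀ n, Countable (Y n)] [∀ n, Countable (Z n)]
    (U : ∀ n, (Fin n → X) → Y n → ℝ) (f : ∀ n, Y n → Z n) (Φ : ℕ → ℝ)
    (hU0 : ∀ n x y, 0 ≤ U n x y) (hU1 : ∀ n x, HasSum (U n x) 1)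
    (hfib : ∀ n (z : Z n), (f n ⁻¹' {z}).Finite ∧ (((f n ⁻¹' {z}).ncard : ℝ)) ≤ 2 ^ Φ n)
    (hΦ : Φ =o[atTop] (fun n => (n : ℝ)))
    (IU : ℝ)
    (hlim : Tendsto (fun n => iCap (U n) / n) atTop (nhds IU)) :
    Tendsto (fun n => iCap (degrade (U n) (f n)) / n) atTop (nhds IU) :=
  iCap_degrade_small_preimage_general U f Φ hU0 hU1 hfib hΦ IU hlim
end

section
/- Suppose channels U and U' on finite X, countable Y satisfy U(y|x) ≤ (1+ε) U'(y|x) and U(y|x) ≥ (1−ε) U'(y|x) for all x, y with 0 ≤ ε < 1. Then for any input distribution p, I(U,p) ≤ I(U',p) + ε H_{p∘U'}[U'(y|x)] + ε H[p•U'] + Γ(ε), where Γ(ε) = (1−ε) log₂(1+ε) − (1+ε) log₂(1−ε). -/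
/-- Conditional output entropy `H_{p∘W}[W(y|x)]`. -/
noncomputable def condOutEntropy {X Y : Type*} (W : X → Y → ℝ) (p : X → ℝ) : ℝ :=
  ∑' xy : X × Y, -(p xy.1 * W xy.1 xy.2 * Real.logb 2 (W xy.1 xy.2))

/-- Output entropy `H[p•W]`. -/
noncomputable def outEntropy {X Y : Type*} (W : X → Y → ℝ) (p : X → ℝ) : ℝ :=
  ∑' y : Y, -(outDist W p y * Real.logb 2 (outDist W p y))

lemma auxA {a b ε : ℝ} (hε0 : 0 ≤ ε) (hε1 : ε < 1)
    (hapos : 0 < a) (ha1 : a ≤ 1) (hbpos : 0 < b)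
    (hl : (1 - ε) * b ≤ a) (hh : a ≤ (1 + ε) * b) :
    a * Real.logb 2 a ≤ (1 - ε) * b * Real.logb 2 b + (1 - ε) * b * Real.logb 2 (1 + ε) := by
  have h1e : (0:ℝ) < 1 + ε := by linarith
  have h1me : (0:ℝ) < 1 - ε := by linarith
  have hmul : Real.logb 2 ((1 + ε) * b) = Real.logb 2 (1 + ε) + Real.logb 2 b :=
    Real.logb_mul (ne_of_gt h1e) (ne_of_gt hbpos)
  by_cases hc : (1 + ε) * b ≤ 1
  · have l1 : Real.logb 2 a ≤ Real.logb 2 ((1 + ε) * b) :=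
      Real.logb_le_logb_of_le one_lt_two hapos hh
    have l2 : Real.logb 2 ((1 + ε) * b) ≤ 0 :=
      Real.logb_nonpos one_lt_two (by positivity) hc
    have s1 : a * Real.logb 2 a ≤ a * Real.logb 2 ((1 + ε) * b) :=
      mul_le_mul_of_nonneg_left l1 hapos.le
    have s2 : a * Real.logb 2 ((1 + ε) * b) ≤ (1 - ε) * b * Real.logb 2 ((1 + ε) * b) :=
      mul_le_mul_of_nonpos_right hl l2
    calc a * Real.logb 2 a ≤ (1 - ε) * b * Real.logb 2 ((1 + ε) * b) := s1.trans s2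
      _ = (1 - ε) * b * Real.logb 2 b + (1 - ε) * b * Real.logb 2 (1 + ε) := by rw [hmul]; ring
  · push_neg at hc
    have l1 : a * Real.logb 2 a ≤ 0 :=
      mul_nonpos_of_nonneg_of_nonpos hapos.le (Real.logb_nonpos one_lt_two hapos.le ha1)
    have l2 : 0 ≤ Real.logb 2 ((1 + ε) * b) := Real.logb_nonneg one_lt_two hc.le
    nlinarith [mul_nonneg (mul_nonneg h1me.le hbpos.le) l2]

lemma auxB {a b q q' ε : ℝ} (hε0 : 0 ≤ ε) (hε1 : ε < 1)
    (ha0 : 0 ≤ a) (hh : a ≤ (1 + ε) * b)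
    (hq'pos : 0 < q') (hq'1 : q' ≤ 1) (hq : (1 - ε) * q' ≤ q) :
    -(a * Real.logb 2 q) ≤ -((1 + ε) * b * Real.logb 2 q') - (1 + ε) * b * Real.logb 2 (1 - ε) := by
  have h1me : (0:ℝ) < 1 - ε := by linarith
  have hqpos : 0 < q := lt_of_lt_of_le (by positivity) hq
  have hmul : Real.logb 2 ((1 - ε) * q') = Real.logb 2 (1 - ε) + Real.logb 2 q' :=
    Real.logb_mul (ne_of_gt h1me) (ne_of_gt hq'pos)
  have l1 : Real.logb 2 ((1 - ε) * q') ≤ Real.logb 2 q :=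
    Real.logb_le_logb_of_le one_lt_two (by positivity) hq
  have l2 : Real.logb 2 ((1 - ε) * q') ≤ 0 :=
    Real.logb_nonpos one_lt_two (by positivity) (by nlinarith)
  have s1 : a * -(Real.logb 2 ((1 - ε) * q')) ≤ (1 + ε) * b * -(Real.logb 2 ((1 - ε) * q')) :=
    mul_le_mul_of_nonneg_right hh (by linarith)
  have s0 : -(a * Real.logb 2 q) ≤ a * -(Real.logb 2 ((1 - ε) * q')) := by
    have := mul_le_mul_of_nonneg_left l1 ha0
    linarith
  calc -(a * Real.logb 2 q) ≤ (1 + ε) * b * -(Real.logb 2 ((1 - ε) * q')) := s0.trans s1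
    _ = -((1 + ε) * b * Real.logb 2 q') - (1 + ε) * b * Real.logb 2 (1 - ε) := by rw [hmul]; ring

/-- If `(1−ε)U'(y|x) ≤ U(y|x) ≤ (1+ε)U'(y|x)` for all `x, y`, then
`I(U,p) ≤ I(U',p) + ε H_{p∘U'}[U'(y|x)] + ε H[p•U'] + Γ(ε)` with
`Γ(ε) = (1−ε) log₂(1+ε) − (1+ε) log₂(1−ε)`. -/
theorem MI_le_of_multiplicative_close
    {X Y : Type*} [Fintype X] [Countable Y]
    (U U' : X → Y → ℝ) (ε : ℝ) (hε0 : 0 ≤ ε) (hε1 : ε < 1)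
    (hU0 : ∀ x y, 0 ≤ U x y) (hU'0 : ∀ x y, 0 ≤ U' x y)
    (hU1 : ∀ x, HasSum (U x) 1) (hU'1 : ∀ x, HasSum (U' x) 1)
    (hlow : ∀ x y, (1 - ε) * U' x y ≤ U x y)
    (hhigh : ∀ x y, U x y ≤ (1 + ε) * U' x y)
    (p : X → ℝ) (hp0 : ∀ x, 0 ≤ p x) (hp1 : ∑ x, p x = 1)
    (hsum1 : Summable (fun xy : X × Y => p xy.1 * U xy.1 xy.2 * iDen U p xy.1 xy.2))
    (hsum2 : Summable (fun xy : X × Y => p xy.1 * U' xy.1 xy.2 * iDen U' p xy.1 xy.2))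
    (hsum3 : Summable (fun xy : X × Y => -(p xy.1 * U' xy.1 xy.2 * Real.logb 2 (U' xy.1 xy.2))))
    (hsum4 : Summable (fun y : Y => -(outDist U' p y * Real.logb 2 (outDist U' p y)))) :
    MI U p ≤ MI U' p + ε * condOutEntropy U' p + ε * outEntropy U' p +
      ((1 - ε) * Real.logb 2 (1 + ε) - (1 + ε) * Real.logb 2 (1 - ε)) := by
  set Γ : ℝ := (1 - ε) * Real.logb 2 (1 + ε) - (1 + ε) * Real.logb 2 (1 - ε) with hΓ
  have h1me : (0:ℝ) < 1 - ε := by linarith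
  have h1pe : (0:ℝ) < 1 + ε := by linarith
  -- basic facts
  have hUle1 : ∀ x y, U x y ≤ 1 := fun x y =>
    le_hasSum (hU1 x) y (fun y' _ => hU0 x y')
  have hU'le1 : ∀ x y, U' x y ≤ 1 := fun x y =>
    le_hasSum (hU'1 x) y (fun y' _ => hU'0 x y')
  have houtD : ∀ (W : X → Y → ℝ) (y : Y), outDist W p y = ∑ x, p x * W x y := by
    intro W y; rw [outDist, tsum_fintype]
  have hq'0 : ∀ y, 0 ≤ outDist U' p y := by
    intro y; rw [houtD]
    exact Finset.sum_nonneg fun x _ => mul_nonneg (hp0 x) (hU'0 x y)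
  have hq'le1 : ∀ y, outDist U' p y ≤ 1 := by
    intro y; rw [houtD, ← hp1]
    exact Finset.sum_le_sum fun x _ => by
      nlinarith [hp0 x, hU'0 x y, hU'le1 x y]
  have hqlow : ∀ y, (1 - ε) * outDist U' p y ≤ outDist U p y := by
    intro y; rw [houtD, houtD, Finset.mul_sum]
    exact Finset.sum_le_sum fun x _ => by nlinarith [hlow x y, hp0 x]
  have hsingle : ∀ x y, p x * U' x y ≤ outDist U' p y := by
    intro x y; rw [houtD]
    exact Finset.single_le_sum (f := fun x' => p x' * U' x' y)
      (fun i _ => mul_nonneg (hp0 i) (hU'0 i y)) (Finset.mem_univ x)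
  have hsingleU : ∀ x y, p x * U x y ≤ outDist U p y := by
    intro x y; rw [houtD]
    exact Finset.single_le_sum (f := fun x' => p x' * U x' y)
      (fun i _ => mul_nonneg (hp0 i) (hU0 i y)) (Finset.mem_univ x)
  have hlogq' : ∀ y, Real.logb 2 (outDist U' p y) ≤ 0 := fun y =>
    Real.logb_nonpos one_lt_two (hq'0 y) (hq'le1 y)
  -- the comparison function
  set g : X × Y → ℝ := fun xy =>
    p xy.1 * U' xy.1 xy.2 * iDen U' p xy.1 xy.2
      + ε * -(p xy.1 * U' xy.1 xy.2 * Real.logb 2 (U' xy.1 xy.2))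
      + ε * -(p xy.1 * U' xy.1 xy.2 * Real.logb 2 (outDist U' p xy.2))
      + p xy.1 * U' xy.1 xy.2 * Γ with hg
  -- summability pieces
  have sPslice : ∀ x : X, Summable (fun y => p x * U' x y) := fun x =>
    (hU'1 x).summable.mul_left (p x)
  have sP : Summable (fun xy : X × Y => p xy.1 * U' xy.1 xy.2) := by
    rw [summable_prod_of_nonneg (fun xy => mul_nonneg (hp0 _) (hU'0 _ _))]
    exact ⟨sPslice, Summable.of_finite⟩
  have hF0 : ∀ xy : X × Y, 0 ≤ -(p xy.1 * U' xy.1 xy.2 * Real.logb 2 (outDist U' p xy.2)) := by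
    intro xy
    have := mul_nonpos_of_nonneg_of_nonpos (mul_nonneg (hp0 xy.1) (hU'0 xy.1 xy.2)) (hlogq' xy.2)
    linarith
  have hFle : ∀ x y, -(p x * U' x y * Real.logb 2 (outDist U' p y)) ≤
      -(outDist U' p y * Real.logb 2 (outDist U' p y)) := by
    intro x y
    have := mul_le_mul_of_nonpos_right (hsingle x y) (hlogq' y)
    linarith
  have sFslice : ∀ x : X, Summable (fun y => -(p x * U' x y * Real.logb 2 (outDist U' p y))) :=
    fun x => Summable.of_nonneg_of_le (fun y => hF0 (x, y)) (fun y => hFle x y) hsum4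
  have sF : Summable (fun xy : X × Y => -(p xy.1 * U' xy.1 xy.2 * Real.logb 2 (outDist U' p xy.2))) := by
    rw [summable_prod_of_nonneg hF0]
    exact ⟨sFslice, Summable.of_finite⟩
  have sg : Summable g := by
    exact ((hsum2.add (hsum3.mul_left ε)).add (sF.mul_left ε)).add (sP.mul_right Γ)
  -- value of ∑' g
  have hPsum : ∑' xy : X × Y, p xy.1 * U' xy.1 xy.2 = 1 := by
    rw [Summable.tsum_prod' sP sPslice]
    have h1 : ∀ x, ∑' y, p x * U' x y = p x := by
      intro x; rw [tsum_mul_left, (hU'1 x).tsum_eq, mul_one]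
    rw [tsum_congr h1, tsum_fintype, hp1]
  have sFswap : Summable (fun yx : Y × X =>
      -(p yx.2 * U' yx.2 yx.1 * Real.logb 2 (outDist U' p yx.1))) :=
    (Equiv.prodComm Y X).summable_iff.2 sF
  have hswap : (∑' yx : Y × X, -(p yx.2 * U' yx.2 yx.1 * Real.logb 2 (outDist U' p yx.1)))
      = ∑' xy : X × Y, -(p xy.1 * U' xy.1 xy.2 * Real.logb 2 (outDist U' p xy.2)) :=
    Equiv.tsum_eq (Equiv.prodComm Y X)
      (fun xy : X × Y => -(p xy.1 * U' xy.1 xy.2 * Real.logb 2 (outDist U' p xy.2)))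
  have hFsum : (∑' xy : X × Y, -(p xy.1 * U' xy.1 xy.2 * Real.logb 2 (outDist U' p xy.2)))
      = outEntropy U' p := by
    rw [← hswap, Summable.tsum_prod' sFswap (fun y => Summable.of_finite)]
    rw [outEntropy]
    apply tsum_congr
    intro y
    rw [tsum_fintype]
    simp [houtD U' y, Finset.sum_mul, Finset.sum_neg_distrib]
  have hgsum : ∑' xy, g xy = MI U' p + ε * condOutEntropy U' p + ε * outEntropy U' p + Γ := by
    rw [hg]
    rw [Summable.tsum_add ((hsum2.add (hsum3.mul_left ε)).add (sF.mul_left ε)) (sP.mul_right Γ)]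
    rw [Summable.tsum_add (hsum2.add (hsum3.mul_left ε)) (sF.mul_left ε)]
    rw [Summable.tsum_add hsum2 (hsum3.mul_left ε)]
    rw [tsum_mul_left, tsum_mul_left, tsum_mul_right, hPsum, hFsum, one_mul]
    rfl
  -- termwise inequality
  have hle : ∀ xy : X × Y, p xy.1 * U xy.1 xy.2 * iDen U p xy.1 xy.2 ≤ g xy := by
    rintro ⟨x, y⟩
    rw [hg]
    simp only
    by_cases hc : p x = 0
    · simp [hc]
    have hcpos : 0 < p x := lt_of_le_of_ne (hp0 x) (Ne.symm hc)
    by_cases hb0 : U' x y = 0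
    · have ha0 : U x y = 0 := le_antisymm (by simpa [hb0] using hhigh x y) (hU0 x y)
      simp [hb0, ha0]
    have hbpos : 0 < U' x y := lt_of_le_of_ne (hU'0 x y) (Ne.symm hb0)
    have hapos : 0 < U x y := lt_of_lt_of_le (by positivity) (hlow x y)
    have hq'pos : 0 < outDist U' p y := lt_of_lt_of_le (by positivity) (hsingle x y)
    have hqpos : 0 < outDist U p y := lt_of_lt_of_le (by positivity) (hsingleU x y)
    rw [iDen, if_neg (by push_neg; exact ⟨ne_of_gt hapos, ne_of_gt hqpos⟩),
        iDen, if_neg (by push_neg; exact ⟨ne_of_gt hbpos, ne_of_gt hq'pos⟩),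
        Real.logb_div (ne_of_gt hapos) (ne_of_gt hqpos),
        Real.logb_div (ne_of_gt hbpos) (ne_of_gt hq'pos)]
    have A1 := auxA hε0 hε1 hapos (hUle1 x y) hbpos (hlow x y) (hhigh x y)
    have B1 := auxB (a := U x y) (b := U' x y) hε0 hε1 (hU0 x y) (hhigh x y)
      hq'pos (hq'le1 y) (hqlow y)
    have A1' := mul_le_mul_of_nonneg_left A1 hcpos.le
    have B1' := mul_le_mul_of_nonneg_left B1 hcpos.le
    rw [hΓ]
    nlinarith [A1', B1']
  calc MI U p ≤ ∑' xy, g xy := Summable.tsum_le_tsum hle hsum1 sg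
    _ = _ := by rw [hgsum]
end
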